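/- Cutting-plane closure is invariant under shifting the lattice by additive units: let C ⊆ Q[X] be a cone and L, L' ⊆ Q[X] with L' ⊆ U(C) + L. Then cp_{L'}(C) ⊆ cp_L(C); in particular cp_{U(C)+L}(C) = cp_L(C). -/

import Mathlib

open MvPolynomial Pointwise

def IsCone {σ : Type} (C : Set (MvPolynomial σ ℚ)) : Prop :=
  (0 : MvPolynomial σ ℚ) ∈ C ∧ (∀ x ∈ C, ∀ y ∈ C, x + y ∈ C) ∧
    ∀ (a : ℚ), 0 ≤ a → ∀ x ∈ C, a • x ∈ C

/-- The additive units of `C`: `U(C) = C ∩ (−C)`. -/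
def unitsOf {σ : Type} (C : Set (MvPolynomial σ ℚ)) : Set (MvPolynomial σ ℚ) :=
  C ∩ (-C)

/-- `D` is closed under cutting planes with respect to `L`: for all integers `a > 0`, `b`
and `p ∈ L`, if `a·p + b ∈ D` then `p + ⌊b/a⌋ ∈ D`. -/
def ClosedCP {σ : Type} (L D : Set (MvPolynomial σ ℚ)) : Prop :=
  ∀ (a b : ℤ), 0 < a → ∀ p ∈ L,
    a • p + (b : MvPolynomial σ ℚ) ∈ D →
      p + ((⌊(b : ℚ) / (a : ℚ)⌋ : ℤ) : MvPolynomial σ ℚ) ∈ D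

/-- `cp_L(C)`: the least cone containing `C` that is closed under cutting planes with
respect to `L`. -/
def cpClosure {σ : Type} (L C : Set (MvPolynomial σ ℚ)) : Set (MvPolynomial σ ℚ) :=
  ⋂₀ {D | IsCone D ∧ C ⊆ D ∧ ClosedCP L D}

/-
A cutting plane for `u + p` with `u` a unit of `C` is a cutting plane for `p` shifted by `u`:
from `a(u + p) + b ∈ D` we get `ap + b ∈ D` by adding `a(-u)`, the cut gives `p + ⌊b/a⌋ ∈ D`,
and adding `u` back gives `u + p + ⌊b/a⌋ ∈ D`. So every cone closed under cuts w.r.t. `L` and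
containing `C` is also closed under cuts w.r.t. `U(C) + L`.
-/

section

variable {σ : Type}

lemma unitsOf_mono {C D : Set (MvPolynomial σ ℚ)} (h : C ⊆ D) : unitsOf C ⊆ unitsOf D :=
  Set.inter_subset_inter h (Set.neg_subset_neg.mpr h)

lemma zero_mem_unitsOf {C : Set (MvPolynomial σ ℚ)} (hC : IsCone C) :
    (0 : MvPolynomial σ ℚ) ∈ unitsOf C :=
  ⟨hC.1, by simpa using hC.1⟩

lemma IsCone.zsmul_mem {D : Set (MvPolynomial σ ℚ)} (hD : IsCone D) {n : ℤ} (hn : 0 ≤ n)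
    {x : MvPolynomial σ ℚ} (hx : x ∈ D) : n • x ∈ D := by
  rw [← Int.cast_smul_eq_zsmul ℚ]
  exact hD.2.2 _ (by exact_mod_cast hn) _ hx

lemma ClosedCP.mono {L L' D : Set (MvPolynomial σ ℚ)} (h : ClosedCP L D) (hL : L' ⊆ L) :
    ClosedCP L' D :=
  fun a b ha p hp => h a b ha p (hL hp)

lemma ClosedCP.unitsOf_add {L D : Set (MvPolynomial σ ℚ)} (hD : IsCone D) (h : ClosedCP L D) :
    ClosedCP (unitsOf D + L) D := by
  rintro a b ha _ ⟨u, ⟨hu, hnu⟩, p, hp, rfl⟩ hcut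
  have hshift : a • p + (b : MvPolynomial σ ℚ) ∈ D := by
    have := hD.2.1 _ hcut _ (hD.zsmul_mem ha.le hnu)
    rwa [smul_add, smul_neg, add_right_comm, add_neg_cancel_comm] at this
  simpa only [add_assoc] using hD.2.1 _ hu _ (h a b ha p hp hshift)

lemma cpClosure_subset_cpClosure {L L' C : Set (MvPolynomial σ ℚ)}
    (h : ∀ D, IsCone D → C ⊆ D → ClosedCP L D → ClosedCP L' D) :
    cpClosure L' C ⊆ cpClosure L C :=
  fun _ hx D ⟨hD, hCD, hL⟩ => hx D ⟨hD, hCD, h D hD hCD hL⟩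

lemma cpClosure_mono {L L' C : Set (MvPolynomial σ ℚ)} (hL : L ⊆ L') :
    cpClosure L C ⊆ cpClosure L' C :=
  cpClosure_subset_cpClosure fun _ _ _ hD => hD.mono hL

lemma cpClosure_subset_of_subset_unitsOf_add {L L' C : Set (MvPolynomial σ ℚ)}
    (hL' : L' ⊆ unitsOf C + L) : cpClosure L' C ⊆ cpClosure L C :=
  cpClosure_subset_cpClosure fun _ hD hCD hL =>
    (hL.unitsOf_add hD).mono (hL'.trans (Set.add_subset_add_right (unitsOf_mono hCD)))

end

/-- cutting-plane closure is invariant under shifting the lattice by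
additive units: if `C` is a cone and `L' ⊆ U(C) + L`, then `cp_{L'}(C) ⊆ cp_L(C)`;
in particular `cp_{U(C)+L}(C) = cp_L(C)`. -/
theorem cp_closure_shift_invariant {σ : Type}
    (C L L' : Set (MvPolynomial σ ℚ)) (hC : IsCone C)
    (hL' : L' ⊆ unitsOf C + L) :
    cpClosure L' C ⊆ cpClosure L C ∧
      cpClosure (unitsOf C + L) C = cpClosure L C :=
  ⟨cpClosure_subset_of_subset_unitsOf_add hL',
    (cpClosure_subset_of_subset_unitsOf_add subset_rfl).antisymm
      (cpClosure_mono (Set.subset_add_right L (zero_mem_unitsOf hC)))⟩
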